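/- In a 1-2 metric space, if u1, u2, u3 are three distinct points with dist(u1,u2) = dist(u2,u3) = 2, then the line through u1,u2 differs from the line through u2,u3. -/

import Mathlib

def line {α : Type*} [MetricSpace α] (u v : α) : Set α :=
  {p | dist p u + dist u v = dist p v ∨ dist u p + dist p v = dist u v ∨
       dist u v + dist v p = dist u p}

def OneTwo (α : Type*) [MetricSpace α] : Prop :=
  ∀ x y : α, x ≠ y → dist x y = 1 ∨ dist x y = 2

def Twins {α : Type*} [MetricSpace α] (u v : α) : Prop :=
  dist u v = 2 ∧ ∀ w : α, w ≠ u → w ≠ v → dist u w = dist v w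

def linesOf (α : Type*) [MetricSpace α] : Set (Set α) :=
  {L | ∃ u v : α, u ≠ v ∧ L = line u v}

section

variable {α : Type*} [MetricSpace α]

theorem right_mem_line (u v : α) : v ∈ line u v :=
  Or.inr <| Or.inl <| by rw [dist_self, add_zero]

theorem OneTwo.dist_le_two (h12 : OneTwo α) (x y : α) : dist x y ≤ 2 := by
  by_cases hxy : x = y
  · simp [hxy]
  · rcases h12 x y hxy with h | h <;> linarith

/-- With `d(u,v) = d(v,w) = 2`, the betweenness conditions for `w` on the line `uv` force
`d(u,w)` to be `0` or `4`; the first is excluded by `u ≠ w`, the second by the diameter bound. -/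
theorem OneTwo.not_mem_line_of_dist_eq_two (h12 : OneTwo α) {u v w : α} (huw : u ≠ w)
    (huv : dist u v = 2) (hvw : dist v w = 2) : w ∉ line u v := by
  have hpos : 0 < dist u w := dist_pos.mpr huw
  have hle : dist u w ≤ 2 := h12.dist_le_two u w
  rintro (h | h | h)
  · rw [huv, dist_comm w v, hvw, dist_comm w u] at h
    linarith
  · rw [huv, dist_comm w v, hvw] at h
    linarith
  · rw [huv, hvw] at h
    linarith

end

theorem stmt2 {α : Type*} [MetricSpace α] (h12 : OneTwo α)
    (u₁ u₂ u₃ : α) (h : [u₁, u₂, u₃].Pairwise (· ≠ ·))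
    (h1 : dist u₁ u₂ = 2) (h2 : dist u₂ u₃ = 2) :
    line u₁ u₂ ≠ line u₂ u₃ := by
  have h13 : u₁ ≠ u₃ := List.rel_of_pairwise_cons h (by simp)
  intro heq
  exact h12.not_mem_line_of_dist_eq_two h13 h1 h2 (heq ▸ right_mem_line u₂ u₃)
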